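/- Let n ∈ ℕ with n ≥ 3. Every pseudostar of kind (n,n−1) is a star, that is, it has exactly one node (vertex of degree greater than 2). -/

import Mathlib

open scoped Classical
open Finset

noncomputable section

/-- The total weight of the minimal subtree of a tree `G` spanning the vertex set `A`:
the sum of the weights of those edges of `G` that lie on every walk between some pair
of vertices of `A` (in a tree, these are exactly the edges of the minimal subtree
containing `A`). -/
def treeWeight {V : Type} [Fintype V] (G : SimpleGraph V) (w : Sym2 V → ℝ)
    (A : Finset V) : ℝ :=
  ∑ e ∈ (Finset.univ : Finset (Sym2 V)),
    if e ∈ G.edgeSet ∧ ∃ a ∈ A, ∃ b ∈ A, ∀ p : G.Walk a b, e ∈ p.edges then w e else 0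

/-- A weighted finite tree whose set of leaves is (the image of) `α`. -/
structure WTree (α : Type) [Fintype α] : Type 1 where
  V : Type
  fintypeV : Fintype V
  G : SimpleGraph V
  isTree : G.IsTree
  w : Sym2 V → ℝ
  label : α → V
  label_inj : Function.Injective label
  leaf_iff : ∀ v : V, (G.neighborSet v).ncard = 1 ↔ v ∈ Set.range label

attribute [instance] WTree.fintypeV

namespace WTree

variable {α : Type} [Fintype α]

/-- The `k`-weight `D_I` : the weight of the minimal subtree containing the leaves
labelled by `I`. -/
def D (T : WTree α) (I : Finset α) : ℝ := treeWeight T.G T.w (I.image T.label)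

/-- A node is a vertex of degree `> 2`. -/
def IsNode (T : WTree α) (v : T.V) : Prop := 2 < (T.G.neighborSet v).ncard

/-- Two vertices are neighbours if the path between them contains exactly one node. -/
def Neighbours (T : WTree α) (a b : T.V) : Prop :=
  a ≠ b ∧ ∃ p : T.G.Walk a b, p.IsPath ∧
    (p.support.toFinset.filter (fun v => T.IsNode v)).card = 1

/-- Two leaves (given by their labels) are neighbours. -/
def LeafNbr (T : WTree α) (i j : α) : Prop := T.Neighbours (T.label i) (T.label j)

/-- A set of leaves is a cherry if any two of its elements are neighbours. -/
def IsCherry (T : WTree α) (C : Finset α) : Prop :=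
  ∀ i ∈ C, ∀ j ∈ C, i ≠ j → T.LeafNbr i j

/-- A cherry is complete if it is not strictly contained in another cherry. -/
def IsCompleteCherry (T : WTree α) (C : Finset α) : Prop :=
  T.IsCherry C ∧ ∀ C' : Finset α, T.IsCherry C' → ¬ C ⊂ C'

/-- Buneman's index `⟨i,j|l,m⟩` : in the subtree spanned by the four leaves, `i,j` are
neighbours, `l,m` are neighbours and `i,l` are not neighbours; equivalently, the path
from `i` to `j` is disjoint from the path from `l` to `m`. -/
def Buneman (T : WTree α) (i j l m : α) : Prop :=
  i ≠ j ∧ l ≠ m ∧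
  ∃ (p : T.G.Walk (T.label i) (T.label j)) (q : T.G.Walk (T.label l) (T.label m)),
    p.IsPath ∧ q.IsPath ∧ ∀ v, v ∈ p.support → v ∉ q.support

/-- The edge `e` lies on the (unique) path between `a` and `b`. -/
def edgeBetween (T : WTree α) (a b : T.V) (e : Sym2 T.V) : Prop :=
  ∀ p : T.G.Walk a b, e ∈ p.edges

/-- The set of leaf labels lying on the `u`-side of the edge `{u,v}`. -/
def sideLeaves (T : WTree α) (u v : T.V) : Finset α :=
  Finset.univ.filter fun i => T.edgeBetween (T.label i) v s(u, v)

/-- A pseudostar of kind `(n,k)` (with `n = #α`): every edge divides the set of leaves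
into two sets such that at least one of them has cardinality `≥ k`. -/
def IsPseudostar (T : WTree α) (k : ℕ) : Prop :=
  ∀ u v : T.V, T.G.Adj u v →
    k ≤ (T.sideLeaves u v).card ∨ k ≤ (T.sideLeaves v u).card

/-- A tree is essential if it has no vertices of degree 2. -/
def IsEssential (T : WTree α) : Prop := ∀ v : T.V, (T.G.neighborSet v).ncard ≠ 2

/-- The edge `e` lies on the twig of the leaf labelled `i`, i.e. on the path from that
leaf to the nearest node (equivalently, on the path from the leaf to every node). -/
def OnTwig (T : WTree α) (i : α) (e : Sym2 T.V) : Prop :=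
  ∀ w : T.V, T.IsNode w → T.edgeBetween (T.label i) w e

/-- An edge is internal if it is an edge of the tree lying on no twig. -/
def IsInternalEdge (T : WTree α) (e : Sym2 T.V) : Prop :=
  e ∈ T.G.edgeSet ∧ ∀ i : α, ¬ T.OnTwig i e

/-- All internal edges have nonzero weight. -/
def InternalNonzero (T : WTree α) : Prop := ∀ e, T.IsInternalEdge e → T.w e ≠ 0

/-- All edges have positive weight. -/
def PositiveWeighted (T : WTree α) : Prop := ∀ e ∈ T.G.edgeSet, 0 < T.w e

/-- All weights are nonnegative and all internal edges have positive weight. -/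
def NNIPWeighted (T : WTree α) : Prop :=
  (∀ e ∈ T.G.edgeSet, 0 ≤ T.w e) ∧ ∀ e, T.IsInternalEdge e → 0 < T.w e

/-- The edge `e` belongs to the minimal subtree containing the leaves labelled by `I`. -/
def inMinSubtree (T : WTree α) (I : Finset α) (e : Sym2 T.V) : Prop :=
  e ∈ T.G.edgeSet ∧ ∃ a ∈ I, ∃ b ∈ I, T.edgeBetween (T.label a) (T.label b) e

end WTree

/-- Isomorphism of weighted trees fixing the labelled leaves. -/
def WIso {α : Type} [Fintype α] (T T' : WTree α) : Prop :=
  ∃ φ : T.V ≃ T'.V,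
    (∀ a b : T.V, T.G.Adj a b ↔ T'.G.Adj (φ a) (φ b)) ∧
    (∀ a b : T.V, T.G.Adj a b → T.w s(a, b) = T'.w s(φ a, φ b)) ∧
    ∀ i : α, φ (T.label i) = T'.label i

/-- A family indexed by the `k`-subsets of `α` is l-treelike if it is realized by a
weighted tree with leaf set `α`. -/
def IsLTreelike (α : Type) [Fintype α] (k : ℕ) (D : Finset α → ℝ) : Prop :=
  ∃ T : WTree α, ∀ I : Finset α, I.card = k → T.D I = D I

/-- p-l-treelike : realized by a positive-weighted tree with leaf set `α`. -/
def IsPLTreelike (α : Type) [Fintype α] (k : ℕ) (D : Finset α → ℝ) : Prop :=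
  ∃ T : WTree α, T.PositiveWeighted ∧ ∀ I : Finset α, I.card = k → T.D I = D I

/-- nn-ip-l-treelike : realized by a nonnegative-weighted, internal-positive-weighted
tree with leaf set `α`. -/
def IsNNIPLTreelike (α : Type) [Fintype α] (k : ℕ) (D : Finset α → ℝ) : Prop :=
  ∃ T : WTree α, T.NNIPWeighted ∧ ∀ I : Finset α, I.card = k → T.D I = D I

/-- p-treelike : realized on a subset of the vertices of a positive-weighted tree. -/
def IsPTreelike (n k : ℕ) (D : Finset (Fin n) → ℝ) : Prop :=
  ∃ (V : Type) (_ : Fintype V) (G : SimpleGraph V) (w : Sym2 V → ℝ) (f : Fin n → V),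
    G.IsTree ∧ Function.Injective f ∧ (∀ e ∈ G.edgeSet, 0 < w e) ∧
    ∀ I : Finset (Fin n), I.card = k → treeWeight G w (I.image f) = D I


/-- A hierarchy: a set system in which any two members intersect in `∅` or in one
of the two. -/
def IsHierarchy {β : Type} (ℋ : Set (Finset β)) : Prop :=
  ∀ H ∈ ℋ, ∀ H' ∈ ℋ, H ∩ H' = ∅ ∨ H ∩ H' = H ∨ H ∩ H' = H'

/-- The element `Σ_{H ∈ ℋ, H ∩ A ≠ ∅, H ⊉ A} H` of the free ℤ-module on the clusters. -/
def hsum {β : Type} (ℋ : Set (Finset β)) (A : Finset β) : Finset β →₀ ℤ :=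
  ∑ᶠ H ∈ {H : Finset β | H ∈ ℋ ∧ (H ∩ A).Nonempty ∧ ¬ A ⊆ H}, Finsupp.single H 1

/-- `m` is a minimal cluster of `ℋ` containing `t`. -/
def IsMinCluster {β : Type} (ℋ : Set (Finset β)) (t : β) (m : Finset β) : Prop :=
  m ∈ ℋ ∧ t ∈ m ∧ ∀ H ∈ ℋ, t ∈ H → ¬ H ⊂ m

/-- `M` is a maximal cluster of `ℋ` containing `t`. -/
def IsMaxCluster {β : Type} (ℋ : Set (Finset β)) (t : β) (M : Finset β) : Prop :=
  M ∈ ℋ ∧ t ∈ M ∧ ∀ H ∈ ℋ, t ∈ H → ¬ M ⊂ H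

/-- `M` is a maximal cluster of `ℋ` containing the cluster `J`. -/
def IsMaxClusterContaining {β : Type} (ℋ : Set (Finset β)) (J M : Finset β) : Prop :=
  M ∈ ℋ ∧ J ⊆ M ∧ ∀ H ∈ ℋ, J ⊆ H → ¬ M ⊂ H

section FamHierarchy

variable (n k : ℕ) (D : Finset (Fin n) → ℝ)

/-- `𝒞⁰` : the sets `Z` of cardinality `≥ 2` such that for all `i,j ∈ Z` the quantity
`D_{i,X} - D_{j,X}` does not depend on `X ∈ ([n] - {i,j} choose k-1)`. -/
def famC0 : Set (Finset (Fin n)) :=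
  {Z | 2 ≤ Z.card ∧ ∀ i ∈ Z, ∀ j ∈ Z, ∀ X X' : Finset (Fin n),
    X.card = k - 1 → i ∉ X → j ∉ X → X'.card = k - 1 → i ∉ X' → j ∉ X' →
    D (insert i X) - D (insert j X) = D (insert i X') - D (insert j X')}

/-- `𝒞̲⁰` : the maximal elements of `𝒞⁰`. -/
def famMaxC0 : Set (Finset (Fin n)) :=
  {Z | Z ∈ famC0 n k D ∧ ∀ Z' ∈ famC0 n k D, ¬ Z ⊂ Z'}

/-- Condition (b) in the definition of `𝒢^s` : there are `R, S` in
`([n]-{i,j,x,y} choose k-2)` with `D_{ijR} + D_{xyR} ≠ D_{ixR} + D_{jyR}` and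
`D_{ijS} + D_{xyS} ≠ D_{iyS} + D_{jxS}`. -/
def famCondB (i j x y : Fin n) : Prop :=
  ∃ R S : Finset (Fin n),
    R.card = k - 2 ∧ i ∉ R ∧ j ∉ R ∧ x ∉ R ∧ y ∉ R ∧
    S.card = k - 2 ∧ i ∉ S ∧ j ∉ S ∧ x ∉ S ∧ y ∉ S ∧
    D (insert i (insert j R)) + D (insert x (insert y R)) ≠
      D (insert i (insert x R)) + D (insert j (insert y R)) ∧
    D (insert i (insert j S)) + D (insert x (insert y S)) ≠
      D (insert i (insert y S)) + D (insert j (insert x S))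

/-- Condition (b) in the definition of `𝒞^s` (with the roles of the pairs permuted). -/
def famCondB' (i j x y : Fin n) : Prop :=
  ∃ R S : Finset (Fin n),
    R.card = k - 2 ∧ i ∉ R ∧ j ∉ R ∧ x ∉ R ∧ y ∉ R ∧
    S.card = k - 2 ∧ i ∉ S ∧ j ∉ S ∧ x ∉ S ∧ y ∉ S ∧
    D (insert i (insert x R)) + D (insert j (insert y R)) ≠
      D (insert i (insert j R)) + D (insert x (insert y R)) ∧
    D (insert i (insert x S)) + D (insert j (insert y S)) ≠
      D (insert i (insert y S)) + D (insert j (insert x S))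

/-- `𝒢⁰`. -/
def famG0 : Set (Finset (Fin n)) :=
  {Z | Z ∈ famMaxC0 n k D ∧ Z.card ≤ n - k ∧
    ∀ i ∈ Z, ∀ j ∈ Z, ∀ x y : Fin n, x ∉ Z → y ∉ Z →
      (({i, j} : Finset (Fin n)) ∈ famMaxC0 n k D ∧
        ({x, y} : Finset (Fin n)) ∈ famMaxC0 n k D) ∨
      famCondB n k D i j x y}

/-- `𝒞^s`, relative to the surviving set `N = [n]^s`. -/
def famCs (N : Finset (Fin n)) : Set (Finset (Fin n)) :=
  {Z | Z ⊆ N ∧ 2 ≤ Z.card ∧ ∀ i ∈ Z, ∀ j ∈ Z, ∀ x y : Fin n,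
    x ∈ N → y ∈ N → x ≠ i → x ≠ j → y ≠ i → y ≠ j →
    ¬ (({i, x} : Finset (Fin n)) ∈ famMaxC0 n k D ∧
        ({j, y} : Finset (Fin n)) ∈ famMaxC0 n k D) ∧
    ¬ famCondB' n k D i j x y}

/-- `𝒞̲^s` : the maximal elements of `𝒞^s`. -/
def famMaxCs (N : Finset (Fin n)) : Set (Finset (Fin n)) :=
  {Z | Z ∈ famCs n k D N ∧ ∀ Z' ∈ famCs n k D N, ¬ Z ⊂ Z'}

/-- The chain relation expressing that `y0` descends from `y` through the history
`hs = [𝒢⁰, …, 𝒢^{s-1}]` of pruned families. -/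
def descChain : List (Set (Finset (Fin n))) → Fin n → Fin n → Prop
  | [], y0, y => y0 = y
  | G :: rest, y0, y =>
      ∃ y1 : Fin n, (y1 = y0 ∨ ∃ Z ∈ G, y0 ∈ Z ∧ y1 ∈ Z) ∧ descChain rest y1 y

/-- `∂Z` : the set of elements of `[n]` descending from an element of `Z`. -/
def bdry (hs : List (Set (Finset (Fin n)))) (Z : Finset (Fin n)) : Finset (Fin n) :=
  Finset.univ.filter fun y0 => ∃ ys ∈ Z, descChain n hs y0 ys

/-- `𝒢^s` (for `s ≥ 1`), relative to the surviving set `N = [n]^s` and the history `hs`. -/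
def famGs (N : Finset (Fin n)) (hs : List (Set (Finset (Fin n)))) :
    Set (Finset (Fin n)) :=
  {Z | Z ∈ famMaxCs n k D N ∧ (bdry n hs Z).card ≤ n - k ∧
    ∀ i ∈ Z, ∀ j ∈ Z, ∀ x y : Fin n, x ∉ Z → y ∉ Z →
      (({i, j} : Finset (Fin n)) ∈ famMaxC0 n k D ∧
        ({x, y} : Finset (Fin n)) ∈ famMaxC0 n k D) ∨
      famCondB n k D i j x y}

/-- The pair `([n]^s, [𝒢⁰, …, 𝒢^{s-1}])`. -/
def famStage : ℕ → Finset (Fin n) × List (Set (Finset (Fin n)))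
  | 0 => (Finset.univ, [])
  | s + 1 =>
      let p := famStage s
      let G := if s = 0 then famG0 n k D else famGs n k D p.1 p.2
      (p.1.filter fun y => ∀ Z ∈ G, y ∈ Z → ∀ z ∈ Z, y ≤ z, p.2 ++ [G])

/-- `𝒢^s`. -/
def famGAt (s : ℕ) : Set (Finset (Fin n)) :=
  if s = 0 then famG0 n k D
  else famGs n k D (famStage n k D s).1 (famStage n k D s).2

/-- The hierarchy over `[n]` associated to the family `{D_I}`. -/
def famHier : Set (Finset (Fin n)) :=
  {A | ∃ s : ℕ, ∃ Z ∈ famGAt n k D s, A = bdry n (famStage n k D s).2 Z}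

/-- Condition (i): if `ℋ` covers `[n]` then the number of maximal clusters is not 2. -/
def CondI {n : ℕ} (ℋ : Set (Finset (Fin n))) : Prop :=
  (∀ x : Fin n, ∃ H ∈ ℋ, x ∈ H) →
    {H | H ∈ ℋ ∧ ∀ H' ∈ ℋ, ¬ H ⊂ H'}.ncard ≠ 2

/-- Condition (ii): for `q ∈ {1,…,n-1}`, `s ∈ {1, k-1}`, `W, W' ∈ ([n] choose s)`,
the sum `Σ_i (D_{W Z_i} - D_{W' Z_i})` takes the same value on all choices of the
`Z_i ∈ ([n]-W-W' choose k-s)` on which the corresponding element of the free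
ℤ-module `⊕_{H ∈ ℋ} ℤ H` is the same. -/
def CondII (n k : ℕ) (D : Finset (Fin n) → ℝ) (ℋ : Set (Finset (Fin n))) : Prop :=
  ∀ q : ℕ, 1 ≤ q → q ≤ n - 1 → ∀ s : ℕ, s = 1 ∨ s = k - 1 →
    ∀ W W' : Finset (Fin n), W.card = s → W'.card = s →
    ∀ Z Z' : ℕ → Finset (Fin n),
      (∀ i < q, (Z i).card = k - s ∧ Disjoint (Z i) W ∧ Disjoint (Z i) W') →
      (∀ i < q, (Z' i).card = k - s ∧ Disjoint (Z' i) W ∧ Disjoint (Z' i) W') →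
      (∑ i ∈ Finset.range q, (hsum ℋ (W ∪ Z i) - hsum ℋ (W' ∪ Z i)) =
        ∑ i ∈ Finset.range q, (hsum ℋ (W ∪ Z' i) - hsum ℋ (W' ∪ Z' i))) →
      (∑ i ∈ Finset.range q, (D (W ∪ Z i) - D (W' ∪ Z i)) =
        ∑ i ∈ Finset.range q, (D (W ∪ Z' i) - D (W' ∪ Z' i)))

end FamHierarchy

section Pruning

namespace WTree

variable {α : Type} [Fintype α]

/-- The subtree of `T` induced on the vertex set `S` (as a graph on the ambient
vertex set). Pruning a cherry, i.e. contracting the twigs of its leaves, is realized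
by deleting the vertices of those twigs except the stalk. -/
def restrictG (T : WTree α) (S : Set T.V) : SimpleGraph T.V where
  Adj a b := T.G.Adj a b ∧ a ∈ S ∧ b ∈ S
  symm := ⟨fun _ _ h => ⟨h.1.symm, h.2.2, h.2.1⟩⟩
  loopless := ⟨fun a h => T.G.loopless.irrefl a h.1⟩

/-- Degree in the pruned tree. -/
def rdeg (T : WTree α) (S : Set T.V) (v : T.V) : ℕ :=
  ((T.restrictG S).neighborSet v).ncard

/-- Leaf of the pruned tree. -/
def rleaf (T : WTree α) (S : Set T.V) (v : T.V) : Prop := v ∈ S ∧ T.rdeg S v = 1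

/-- Node (vertex of degree `> 2`) of the pruned tree. -/
def rnode (T : WTree α) (S : Set T.V) (v : T.V) : Prop := v ∈ S ∧ 2 < T.rdeg S v

/-- Neighbours in the pruned tree: the path between them contains exactly one node. -/
def rnbr (T : WTree α) (S : Set T.V) (a b : T.V) : Prop :=
  a ≠ b ∧ ∃ p : (T.restrictG S).Walk a b, p.IsPath ∧
    (p.support.toFinset.filter (fun v => T.rnode S v)).card = 1

/-- Cherry of the pruned tree: a set of leaves any two of which are neighbours. -/
def rCherry (T : WTree α) (S : Set T.V) (C : Set T.V) : Prop :=
  (∀ v ∈ C, T.rleaf S v) ∧ ∀ a ∈ C, ∀ b ∈ C, a ≠ b → T.rnbr S a b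

/-- Complete cherry of the pruned tree. -/
def rCompleteCherry (T : WTree α) (S : Set T.V) (C : Set T.V) : Prop :=
  T.rCherry S C ∧ ∀ C' : Set T.V, T.rCherry S C' → ¬ C ⊂ C'

/-- The stalk of a cherry: the node lying on the path from any element of the cherry
to any node. -/
def rStalk (T : WTree α) (S : Set T.V) (C : Set T.V) (v : T.V) : Prop :=
  T.rnode S v ∧ ∀ a ∈ C, ∀ w : T.V, T.rnode S w →
    ∀ p : (T.restrictG S).Walk a w, p.IsPath → v ∈ p.support

/-- `v` is on the twig of the leaf `ℓ` in the pruned tree: `v` is not a node and lies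
on the path from `ℓ` to every node. -/
def rTwigVert (T : WTree α) (S : Set T.V) (ℓ v : T.V) : Prop :=
  v ∈ S ∧ ¬ T.rnode S v ∧ ∀ w : T.V, T.rnode S w →
    ∀ p : (T.restrictG S).Walk ℓ w, p.IsPath → v ∈ p.support

/-- The vertex set obtained by pruning the cherry `C` (contracting the twigs of its
leaves). -/
def pruneCherry (T : WTree α) (S : Set T.V) (C : Set T.V) : Set T.V :=
  S \ {v | ∃ ℓ ∈ C, T.rTwigVert S ℓ v}

/-- A good cherry: a complete cherry whose stalk is a leaf of the tree obtained by
pruning it. -/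
def rGoodCherry (T : WTree α) (S : Set T.V) (C : Set T.V) : Prop :=
  T.rCompleteCherry S C ∧ ∃ v : T.V, T.rStalk S C v ∧ T.rleaf (T.pruneCherry S C) v

/-- The leaf labelled `x` (of the original tree) descends from the leaf `y` of the
pruned tree: the path in the original tree from `x` to `y` contains no leaf of the
pruned tree other than `y`. -/
def descLeaf (T : WTree α) (S : Set T.V) (x : α) (y : T.V) : Prop :=
  T.rleaf S y ∧ ∀ p : T.G.Walk (T.label x) y, p.IsPath →
    ∀ v ∈ p.support, T.rleaf S v → v = y

/-- `∂C` : the set of labels descending from an element of `C`. -/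
def bdryV (T : WTree α) (S : Set T.V) (C : Set T.V) : Finset α :=
  Finset.univ.filter fun x => ∃ y ∈ C, T.descLeaf S x y

/-- One pruning step: prune all good cherries `C` with `#∂C ≤ r`. -/
def pruneStage (T : WTree α) (r : ℕ) (S : Set T.V) : Set T.V :=
  S \ {v | ∃ C : Set T.V, T.rGoodCherry S C ∧ (T.bdryV S C).card ≤ r ∧
    ∃ ℓ ∈ C, T.rTwigVert S ℓ v}

/-- The vertex set of `P^s`. -/
def stageSet (T : WTree α) (r : ℕ) : ℕ → Set T.V
  | 0 => Set.univ
  | s + 1 => T.pruneStage r (T.stageSet r s)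

/-- The hierarchy associated to the pseudostar `T` (with `r = n - k`): the sets `∂C`
for `C` a good cherry of some `P^s` with `#∂C ≤ r`; when `L(P^s)` is the union of two
complete cherries both with `#∂C_i ≤ r`, only the one whose `∂` contains the minimum
of `∂C₁ ∪ ∂C₂` is included. -/
def psHier [LinearOrder α] (T : WTree α) (r : ℕ) : Set (Finset α) :=
  {A | ∃ (s : ℕ) (C : Set T.V),
    T.rGoodCherry (T.stageSet r s) C ∧
    (T.bdryV (T.stageSet r s) C).card ≤ r ∧
    A = T.bdryV (T.stageSet r s) C ∧
    ∀ C₂ : Set T.V, T.rCompleteCherry (T.stageSet r s) C₂ →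
      (∀ v : T.V, T.rleaf (T.stageSet r s) v ↔ v ∈ C ∪ C₂) →
      (T.bdryV (T.stageSet r s) C₂).card ≤ r →
      ∃ m ∈ T.bdryV (T.stageSet r s) C,
        ∀ x ∈ T.bdryV (T.stageSet r s) C ∪ T.bdryV (T.stageSet r s) C₂, m ≤ x}

/-- The edge `e` belongs to the twig of the leaf `v` in the pruned tree on `S`. -/
def rOnTwigEdge (T : WTree α) (S : Set T.V) (v : T.V) (e : Sym2 T.V) : Prop :=
  e ∈ (T.restrictG S).edgeSet ∧ ∀ w : T.V, T.rnode S w →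
    ∀ p : (T.restrictG S).Walk v w, p.IsPath → e ∈ p.edges

end WTree

end Pruning

/-!
Counting degrees in a finite tree gives `#leaves = 2 + ∑ v, (deg v - 2)`, so a tree with a vertex
of degree `d ≥ 2` has at least `d` leaves, and a tree of maximal degree `2` has exactly two.
Deleting an edge `uv` of a tree leaves the component of `u`, again a tree, in which only `u` lost a
neighbour; hence if that side of `uv` contains a node, it contains at least two leaves of the
original tree. If a pseudostar of kind `(n, n - 1)` had two nodes, the first edge of the path
between them would have at least two leaves on either side, so neither side would carry `n - 1`
of the `n` leaves. A node exists since `n ≥ 3`.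
-/

namespace SimpleGraph

variable {V : Type} {G : SimpleGraph V}

lemma ncard_neighborSet_eq_degree (v : V) [Fintype (G.neighborSet v)] :
    (G.neighborSet v).ncard = G.degree v := by
  rw [Set.ncard_eq_toFinset_card', Set.toFinset_card, card_neighborSet_eq_degree]

lemma Preconnected.reachable_deleteEdges_or (hG : G.Preconnected) (u v x : V) :
    (G.deleteEdges {s(u, v)}).Reachable x u ∨ (G.deleteEdges {s(u, v)}).Reachable x v := by
  let R (z : V) := (G.deleteEdges {s(u, v)}).Reachable z u ∨
    (G.deleteEdges {s(u, v)}).Reachable z v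
  have hwalk : ∀ {a b : V}, G.Walk a b → R b → R a := by
    intro a b p hb
    induction p with
    | nil => exact hb
    | @cons a c _ hac _ ih =>
      by_cases he : s(a, c) = s(u, v)
      · rcases Sym2.eq_iff.mp he with ⟨rfl, -⟩ | ⟨rfl, -⟩
        exacts [.inl .rfl, .inr .rfl]
      · have hac' : (G.deleteEdges {s(u, v)}).Adj a c := by simp [hac, he]
        exact (ih hb).imp hac'.reachable.trans hac'.reachable.trans
  obtain ⟨p⟩ := hG x u
  exact hwalk p (.inl .rfl)

lemma IsTree.reachable_deleteEdges_iff (hG : G.IsTree) {u v : V} (huv : G.Adj u v) (x : V) :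
    (G.deleteEdges {s(u, v)}).Reachable x u ↔ ¬ (G.deleteEdges {s(u, v)}).Reachable x v := by
  have hbridge : ¬ (G.deleteEdges {s(u, v)}).Reachable u v :=
    isBridge_iff.mp (isAcyclic_iff_forall_adj_isBridge.mp hG.isAcyclic huv)
  refine ⟨fun hu hv => hbridge (hu.symm.trans hv), fun hv => ?_⟩
  exact (hG.preconnected.reachable_deleteEdges_or u v x).resolve_right hv

variable [Fintype V] [DecidableRel G.Adj]

lemma degree_deleteEdges_of_ne {u v x : V} (hu : x ≠ u) (hv : x ≠ v) :
    (G.deleteEdges {s(u, v)}).degree x = G.degree x := by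
  simp only [← card_neighborFinset_eq_degree]
  congr 1
  ext y
  simp [hu, hv]

lemma degree_deleteEdges_add_one {u v : V} (huv : G.Adj u v) :
    (G.deleteEdges {s(u, v)}).degree u + 1 = G.degree u := by
  simp only [← card_neighborFinset_eq_degree]
  rw [← card_insert_of_notMem (a := v) (by simp)]
  congr 1
  ext y
  by_cases hy : y = v <;> simp [hy, huv, huv.ne]

lemma degree_connectedComponent_toSimpleGraph (C : G.ConnectedComponent) (x : C) :
    C.toSimpleGraph.degree x = G.degree x := by
  -- membership in `C` and in `C.supp` carry different decidability instances
  convert degree_induce_of_neighborSet_subset fun _ hy => C.mem_supp_of_adj_mem_supp x.2 hy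
  · exact Iff.rfl
  · rfl

lemma IsTree.card_degree_eq_one [Nontrivial V] (hG : G.IsTree) :
    #{v | G.degree v = 1} = 2 + ∑ v, (G.degree v - 2) := by
  have hpos : ∀ v, 0 < G.degree v := fun v =>
    hG.preconnected.minDegree_pos_of_nontrivial.trans_le (G.minDegree_le_degree v)
  have hsum : ∑ v, G.degree v + #{v | G.degree v = 1} =
      ∑ v, (G.degree v - 2) + 2 * Fintype.card V :=
    calc ∑ v, G.degree v + #{v | G.degree v = 1}
        = ∑ v, (G.degree v + if G.degree v = 1 then 1 else 0) := by
          rw [sum_add_distrib, card_filter]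
      _ = ∑ v, (G.degree v - 2 + 2) :=
          sum_congr rfl fun v _ => by have := hpos v; split_ifs <;> omega
      _ = ∑ v, (G.degree v - 2) + 2 * Fintype.card V := by
          rw [sum_add_distrib, sum_const, card_univ, smul_eq_mul, mul_comm]
  have := hG.card_edgeFinset
  rw [sum_degrees_eq_twice_card_edges] at hsum
  omega

lemma IsTree.degree_le_card_degree_eq_one (hG : G.IsTree) {w : V} (hw : 2 ≤ G.degree w) :
    G.degree w ≤ #{v | G.degree v = 1} := by
  obtain ⟨x, hx⟩ := G.degree_pos_iff_exists_adj w |>.mp (by omega)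
  have : Nontrivial V := ⟨w, x, hx.ne⟩
  rw [hG.card_degree_eq_one]
  have := single_le_sum (fun v _ => Nat.zero_le (G.degree v - 2)) (mem_univ w)
  omega

lemma IsTree.card_degree_eq_one_eq_two [Nontrivial V] (hG : G.IsTree)
    (h : ∀ v, G.degree v ≤ 2) : #{v | G.degree v = 1} = 2 := by
  simp [hG.card_degree_eq_one, Nat.sub_eq_zero_of_le (h _)]

lemma IsTree.two_le_card_degree_eq_one_of_reachable_deleteEdges (hG : G.IsTree) {u v w : V}
    (huv : G.Adj u v) (hwu : (G.deleteEdges {s(u, v)}).Reachable w u) (hw : 2 < G.degree w) :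
    2 ≤ #{x | G.degree x = 1 ∧ (G.deleteEdges {s(u, v)}).Reachable x u} := by
  let C := (G.deleteEdges {s(u, v)}).connectedComponentMk u
  have hmem : ∀ x, x ∈ C ↔ (G.deleteEdges {s(u, v)}).Reachable x u :=
    fun x => ConnectedComponent.eq
  have hC : C.toSimpleGraph.IsTree :=
    (hG.isAcyclic.anti (G.deleteEdges_le _)).isTree_connectedComponent C
  have hv : ∀ x ∈ C, x ≠ v := by
    rintro x hx rfl
    exact (hG.reachable_deleteEdges_iff huv x).mp ((hmem x).mp hx) .rfl
  have hdeg : ∀ x : C, x.1 ≠ u → C.toSimpleGraph.degree x = G.degree x := fun x hx => by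
    rw [degree_connectedComponent_toSimpleGraph]
    exact degree_deleteEdges_of_ne hx (hv x x.2)
  let u' : C := ⟨u, (hmem u).mpr .rfl⟩
  -- If `w = u`, then `u` has degree `≥ 2` in `C` and is not a leaf of it; otherwise `C` has at
  -- least `deg w ≥ 3` leaves, at most one of which is `u`.
  have hleaves : 2 ≤ #(({x | C.toSimpleGraph.degree x = 1} : Finset C).erase u') := by
    by_cases hwu' : w = u
    · subst hwu'
      have hu' : 2 ≤ C.toSimpleGraph.degree u' := by
        have : C.toSimpleGraph.degree u' + 1 = G.degree w := by
          rw [degree_connectedComponent_toSimpleGraph]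
          exact degree_deleteEdges_add_one huv
        omega
      rw [erase_eq_of_notMem (by rw [mem_filter_univ]; omega)]
      exact hu'.trans (hC.degree_le_card_degree_eq_one hu')
    · have hw' : C.toSimpleGraph.degree ⟨w, (hmem w).mpr hwu⟩ = G.degree w := hdeg _ hwu'
      have := hC.degree_le_card_degree_eq_one (hw'.ge.trans' hw.le)
      have := pred_card_le_card_erase (s := {x | C.toSimpleGraph.degree x = 1}) (a := u')
      omega
  refine hleaves.trans (card_le_card_of_injOn Subtype.val (fun x hx => ?_)
    Subtype.val_injective.injOn)
  obtain ⟨hxu, hx⟩ := mem_erase.mp hx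
  rw [mem_filter_univ] at hx
  rw [coe_filter_univ]
  exact ⟨hdeg x (fun h => hxu (Subtype.ext h)) ▸ hx, (hmem x).mp x.2⟩

end SimpleGraph

namespace WTree

open SimpleGraph

variable {α : Type} [Fintype α] (T : WTree α)

lemma isNode_iff {x : T.V} : T.IsNode x ↔ 2 < T.G.degree x := by
  rw [IsNode, ncard_neighborSet_eq_degree]

lemma degree_eq_one_iff {x : T.V} : T.G.degree x = 1 ↔ x ∈ Set.range T.label := by
  rw [← ncard_neighborSet_eq_degree]
  exact T.leaf_iff x

lemma card_degree_eq_one : #{x | T.G.degree x = 1} = Fintype.card α := by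
  have : ({x | T.G.degree x = 1} : Finset T.V) = univ.image T.label := by
    ext x
    simp [degree_eq_one_iff]
  rw [this, card_image_of_injective _ T.label_inj, card_univ]

lemma exists_isNode (h : 3 ≤ Fintype.card α) : ∃ w, T.IsNode w := by
  by_contra! hnode
  have : Nontrivial α := Fintype.one_lt_card_iff_nontrivial.mp (by omega)
  have : Nontrivial T.V := T.label_inj.nontrivial
  have := T.isTree.card_degree_eq_one_eq_two fun v => by simpa [isNode_iff] using hnode v
  rw [card_degree_eq_one] at this
  omega

variable {T}

lemma mem_sideLeaves {u v : T.V} (huv : T.G.Adj u v) (i : α) :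
    i ∈ T.sideLeaves u v ↔ (T.G.deleteEdges {s(u, v)}).Reachable (T.label i) u := by
  rw [T.isTree.reachable_deleteEdges_iff huv, reachable_deleteEdges_iff_exists_walk,
    not_exists_not, sideLeaves, mem_filter_univ, edgeBetween]

lemma card_sideLeaves_add_card_sideLeaves {u v : T.V} (huv : T.G.Adj u v) :
    #(T.sideLeaves u v) + #(T.sideLeaves v u) = Fintype.card α := by
  have : T.sideLeaves v u = (T.sideLeaves u v)ᶜ := by
    ext i
    rw [mem_compl, mem_sideLeaves huv, mem_sideLeaves huv.symm, Sym2.eq_swap,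
      T.isTree.reachable_deleteEdges_iff huv, not_not]
  rw [this, card_add_card_compl]

lemma two_le_card_sideLeaves {u v w : T.V} (huv : T.G.Adj u v) (hw : T.IsNode w)
    (hwu : (T.G.deleteEdges {s(u, v)}).Reachable w u) : 2 ≤ #(T.sideLeaves u v) := by
  have : (T.sideLeaves u v).image T.label =
      ({x | T.G.degree x = 1 ∧ (T.G.deleteEdges {s(u, v)}).Reachable x u} : Finset T.V) := by
    ext x
    simp only [mem_image, mem_sideLeaves huv, mem_filter_univ, degree_eq_one_iff]
    constructor
    · rintro ⟨i, hi, rfl⟩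
      exact ⟨⟨i, rfl⟩, hi⟩
    · rintro ⟨⟨i, rfl⟩, hi⟩
      exact ⟨i, hi, rfl⟩
  rw [← card_image_of_injective _ T.label_inj, this]
  exact T.isTree.two_le_card_degree_eq_one_of_reachable_deleteEdges huv hwu
    (T.isNode_iff.mp hw)

lemma IsPseudostar.eq_of_isNode (hT : T.IsPseudostar (Fintype.card α - 1)) {y w : T.V}
    (hy : T.IsNode y) (hw : T.IsNode w) : y = w := by
  obtain ⟨p, hp, -⟩ := T.isTree.existsUnique_path y w
  cases p with
  | nil => rfl
  | @cons _ c _ hyc q =>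
    have hq : s(c, y) ∉ q.reverse.edges := by
      rw [Walk.edges_reverse, List.mem_reverse, Sym2.eq_swap]
      exact fun h => ((Walk.cons_isPath_iff hyc q).mp hp).2 (q.fst_mem_support_of_mem_edges h)
    have hy_side := two_le_card_sideLeaves hyc hy .rfl
    have hw_side := two_le_card_sideLeaves hyc.symm hw
      (reachable_deleteEdges_iff_exists_walk.mpr ⟨q.reverse, hq⟩)
    have hsum := card_sideLeaves_add_card_sideLeaves hyc
    have hedge := hT y c hyc
    omega

end WTree

/-- **Remark (i).** A pseudostar of kind `(n, n-1)` is a star, i.e. a tree with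
exactly one node. -/
theorem pseudostar_kind_n_sub_one_is_star (n : ℕ) (hn : 3 ≤ n)
    (T : WTree (Fin n)) (hps : T.IsPseudostar (n - 1)) :
    ∃! v : T.V, T.IsNode v := by
  obtain ⟨w, hw⟩ := T.exists_isNode (by rwa [Fintype.card_fin])
  have hps' : T.IsPseudostar (Fintype.card (Fin n) - 1) := by rwa [Fintype.card_fin]
  exact ⟨w, hw, fun y hy => hps'.eq_of_isNode hy hw⟩
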